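/- Let G be a simple graph, x a vertex, and B a connected component of G − N[x] (a block at x). For any vertex y ∈ B and any vertex z ∈ B \ N[y], either z lies in the interval I(x,y), or z lies in a connected component of G − N[y] that is entirely contained in B (a block at y contained in B). -/

import Mathlib

open SimpleGraph

/-- The closed neighborhood of a vertex. -/
def closedNbh {V : Type*} (G : SimpleGraph V) (v : V) : Set V :=
  insert v (G.neighborSet v)

/-- `u` and `w` are joined by a walk all of whose vertices avoid the set `A`. -/
def reachAvoid {V : Type*} (G : SimpleGraph V) (A : Set V) (u w : V) : Prop :=
  ∃ p : G.Walk u w, ∀ x ∈ p.support, x ∉ A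

/-- `{p, q, r}` is an asteroidal triple: three pairwise nonadjacent (distinct) vertices
such that every two of them are joined by a path avoiding the closed neighborhood
of the third. -/
def IsAT {V : Type*} (G : SimpleGraph V) (p q r : V) : Prop :=
  p ≠ q ∧ p ≠ r ∧ q ≠ r ∧ ¬ G.Adj p q ∧ ¬ G.Adj p r ∧ ¬ G.Adj q r ∧
  reachAvoid G (closedNbh G r) p q ∧ reachAvoid G (closedNbh G q) p r ∧
  reachAvoid G (closedNbh G p) q r

/-- `C` is a block at `v`: a connected component of `G − N[v]`. -/
def IsBlockAt {V : Type*} (G : SimpleGraph V) (v : V) (C : Set V) : Prop :=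
  C.Nonempty ∧ C ⊆ (closedNbh G v)ᶜ ∧ (G.induce C).Connected ∧
  ∀ u ∉ C, u ∉ closedNbh G v → ∀ c ∈ C, ¬ G.Adj u c

/-- `z` is between the nonadjacent vertices `x` and `y`: `z` and `x` lie in a common
component of `G − N[y]`, and `z` and `y` lie in a common component of `G − N[x]`. -/
def Between {V : Type*} (G : SimpleGraph V) (x y z : V) : Prop :=
  reachAvoid G (closedNbh G y) x z ∧ reachAvoid G (closedNbh G x) y z

/-- The interval between `x` and `y`: all vertices between `x` and `y`. -/
def interval {V : Type*} (G : SimpleGraph V) (x y : V) : Set V :=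
  {z | Between G x y z}

/-! A vertex `z ∈ B \ N[y]` lies in the component `D` of `G − N[y]` containing it. Either
`D ⊆ B`, and `D` is the required block at `y`; or some walk in `G − N[y]` leaves `B` from `z`.
Since `B` is a component of `G − N[x]`, the first vertex of that walk outside `B` lies in
`N[x]`, so `z` reaches `x` in `G − N[y]`; and `z` reaches `y` inside `B ⊆ G − N[x]`. -/

section Blocks

variable {V : Type*} {G : SimpleGraph V} {A B : Set V} {u v w x : V}

lemma mem_closedNbh_comm : u ∈ closedNbh G v ↔ v ∈ closedNbh G u := by
  simp only [closedNbh, Set.mem_insert_iff, mem_neighborSet, adj_comm, eq_comm]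

lemma reachAvoid_refl (hu : u ∉ A) : reachAvoid G A u u :=
  ⟨.nil, by simpa⟩

lemma reachAvoid.symm (h : reachAvoid G A u w) : reachAvoid G A w u := by
  obtain ⟨p, hp⟩ := h
  exact ⟨p.reverse, fun a ha => hp a (by simpa using ha)⟩

lemma reachAvoid_of_mem_support (p : G.Walk u w) (hp : ∀ a ∈ p.support, a ∉ A)
    (hv : v ∈ p.support) : reachAvoid G A u v := by
  classical
  exact ⟨p.takeUntil v hv, fun a ha => hp a (p.support_takeUntil_subset_support hv ha)⟩

lemma reachAvoid.concat (h : reachAvoid G A u v) (hvw : G.Adj v w) (hw : w ∉ A) :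
    reachAvoid G A u w := by
  obtain ⟨p, hp⟩ := h
  refine ⟨p.concat hvw, fun a ha => ?_⟩
  rcases List.mem_append.mp (Walk.support_concat p hvw ▸ ha) with ha | ha
  · exact hp a ha
  · exact List.mem_singleton.mp ha ▸ hw

lemma reachAvoid.of_mem_closedNbh (h : reachAvoid G A u v) (hv : v ∈ closedNbh G x)
    (hx : x ∉ A) : reachAvoid G A u x := by
  rcases hv with rfl | hvx
  · exact h
  · exact h.concat (mem_neighborSet G x v |>.mp hvx).symm hx

lemma reachAvoid_of_connected_induce (hB : (G.induce B).Connected) (hBA : B ⊆ Aᶜ)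
    (hu : u ∈ B) (hw : w ∈ B) : reachAvoid G A u w := by
  obtain ⟨q⟩ := hB.preconnected ⟨u, hu⟩ ⟨w, hw⟩
  refine ⟨q.map (Embedding.induce B).toHom, fun a ha => ?_⟩
  obtain ⟨⟨a', ha'⟩, _, rfl⟩ := List.mem_map.mp (Walk.support_map _ q ▸ ha)
  exact hBA ha'

lemma isBlockAt_setOf_reachAvoid (hu : u ∉ closedNbh G x) :
    IsBlockAt G x {w | reachAvoid G (closedNbh G x) u w} := by
  refine ⟨⟨u, reachAvoid_refl hu⟩, fun w ⟨p, hp⟩ => hp w p.end_mem_support, ?_, ?_⟩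
  · rw [connected_iff_exists_forall_reachable]
    refine ⟨⟨u, reachAvoid_refl hu⟩, fun ⟨w, p, hp⟩ => ⟨p.induce _ fun a ha => ?_⟩⟩
    exact reachAvoid_of_mem_support p hp ha
  · exact fun w hw hwx c hc hwc => hw (hc.concat hwc.symm hwx)

lemma IsBlockAt.reachAvoid_of_walk_leaves (hB : IsBlockAt G x B) (hx : x ∉ A)
    (p : G.Walk u w) (hp : ∀ a ∈ p.support, a ∉ A) (hu : u ∈ B) (hw : w ∉ B) :
    reachAvoid G A u x := by
  obtain ⟨d, hd, hdB, hdB'⟩ := p.exists_boundary_dart B hu hw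
  have hdx : d.snd ∈ closedNbh G x := by
    by_contra hdx
    exact hB.2.2.2 d.snd hdB' hdx d.fst hdB d.adj.symm
  have hud : reachAvoid G A u d.snd :=
    reachAvoid_of_mem_support p hp (p.dart_snd_mem_support_of_mem_darts hd)
  exact hud.of_mem_closedNbh hdx hx

end Blocks

/-- if `B` is a block at `x`, `y ∈ B` and `z ∈ B \ N[y]`, then `z` lies
in the interval `I(x,y)`, or `z` lies in a block at `y` entirely contained in `B`. -/
theorem stmt10 {V : Type*} (G : SimpleGraph V) (x : V) (B : Set V)
    (hB : IsBlockAt G x B) (y : V) (hy : y ∈ B) (z : V) (hz : z ∈ B)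
    (hzy : z ∉ closedNbh G y) :
    z ∈ interval G x y ∨ ∃ D : Set V, IsBlockAt G y D ∧ z ∈ D ∧ D ⊆ B := by
  by_cases hDB : {w | reachAvoid G (closedNbh G y) z w} ⊆ B
  · exact Or.inr ⟨_, isBlockAt_setOf_reachAvoid hzy, reachAvoid_refl hzy, hDB⟩
  · obtain ⟨w, ⟨p, hp⟩, hwB⟩ := Set.not_subset.mp hDB
    have hxy : x ∉ closedNbh G y := mem_closedNbh_comm.not.mp (hB.2.1 hy)
    exact Or.inl ⟨(hB.reachAvoid_of_walk_leaves hxy p hp hz hwB).symm,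
      reachAvoid_of_connected_induce hB.2.2.1 hB.2.1 hy hz⟩
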